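/- The null point location x₀ = (1/ψ)·artanh((cosh(ψL) − 1)/(sinh(ψL) + k_b/(Eψ))) satisfies x₀ ≤ L/2, with equality if and only if k_b = 0. -/

import Mathlib

/-- Real inverse hyperbolic tangent. -/
noncomputable def artanh (y : ℝ) : ℝ := (1 / 2) * Real.log ((1 + y) / (1 - y))

/-!
For `kb = 0` the argument of `artanh` is `(cosh a - 1) / sinh a = tanh (a / 2)` with `a = ψ L`,
so `x₀ = L / 2`. Increasing `kb` strictly decreases that argument inside `(-1, 1)`, where `artanh`
is strictly increasing.
-/

open Set

lemma artanh_eq_real_artanh {y : ℝ} (hy : y ∈ Icc (-1) 1) : artanh y = Real.artanh y :=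
  (Real.artanh_eq_half_log hy).symm

lemma artanh_tanh (x : ℝ) : artanh (Real.tanh x) = x := by
  rw [artanh_eq_real_artanh ⟨(Real.neg_one_lt_tanh x).le, (Real.tanh_lt_one x).le⟩,
    Real.artanh_tanh]

lemma strictMonoOn_artanh : StrictMonoOn artanh (Ioo (-1) 1) := by
  intro x hx y hy hxy
  rw [artanh_eq_real_artanh (Ioo_subset_Icc_self hx),
    artanh_eq_real_artanh (Ioo_subset_Icc_self hy)]
  exact Real.strictMonoOn_artanh hx hy hxy

-- At `x = 0` both sides vanish, the right one as `0 / 0`.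
lemma Real.tanh_half_eq (x : ℝ) : Real.tanh (x / 2) = (Real.cosh x - 1) / Real.sinh x := by
  obtain ⟨t, rfl⟩ : ∃ t, x = 2 * t := ⟨x / 2, by ring⟩
  rw [mul_div_cancel_left₀ t two_ne_zero, Real.cosh_two_mul, Real.sinh_two_mul, Real.cosh_sq,
    Real.tanh_eq_sinh_div_cosh]
  rcases eq_or_ne (Real.sinh t) 0 with h | h
  · simp [h]
  · have := (Real.cosh_pos t).ne'
    field_simp
    ring

section NullRatio

variable {a : ℝ}

lemma strictAntiOn_cosh_sub_one_div_sinh_add (ha : 0 < a) :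
    StrictAntiOn (fun c ↦ (Real.cosh a - 1) / (Real.sinh a + c)) (Ici 0) := by
  intro c (hc : 0 ≤ c) c' _ hcc'
  have hs := Real.sinh_pos_iff.2 ha
  exact div_lt_div_of_pos_left (by linarith [Real.one_lt_cosh.2 ha.ne']) (by linarith)
    (by linarith)

lemma cosh_sub_one_div_sinh_add_mem_Ioo (ha : 0 < a) {c : ℝ} (hc : 0 ≤ c) :
    (Real.cosh a - 1) / (Real.sinh a + c) ∈ Ioo (-1) 1 := by
  have hs := Real.sinh_pos_iff.2 ha
  have hnonneg : 0 ≤ (Real.cosh a - 1) / (Real.sinh a + c) :=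
    div_nonneg (by linarith [Real.one_le_cosh a]) (by linarith)
  refine ⟨by linarith, ?_⟩
  calc (Real.cosh a - 1) / (Real.sinh a + c)
      ≤ (Real.cosh a - 1) / (Real.sinh a + 0) :=
        (strictAntiOn_cosh_sub_one_div_sinh_add ha).antitoneOn self_mem_Ici hc hc
    _ = Real.tanh (a / 2) := by rw [add_zero, Real.tanh_half_eq]
    _ < 1 := Real.tanh_lt_one _

lemma strictAntiOn_artanh_cosh_sub_one_div_sinh_add (ha : 0 < a) :
    StrictAntiOn (fun c ↦ artanh ((Real.cosh a - 1) / (Real.sinh a + c))) (Ici 0) :=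
  strictMonoOn_artanh.comp_strictAntiOn (strictAntiOn_cosh_sub_one_div_sinh_add ha)
    fun _ hc ↦ cosh_sub_one_div_sinh_add_mem_Ioo ha hc

end NullRatio

/-- The null point satisfies `x₀ ≤ L/2`, with equality iff the tip-spring stiffness
vanishes (`k_b = 0`). -/
theorem null_point_at_most_mid_depth
    (ψ E L kb : ℝ) (hψ : 0 < ψ) (hE : 0 < E) (hL : 0 < L) (hkb : 0 ≤ kb) :
    let x₀ : ℝ := (1 / ψ) *
      artanh ((Real.cosh (ψ * L) - 1) / (Real.sinh (ψ * L) + kb / (E * ψ)))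
    x₀ ≤ L / 2 ∧ (x₀ = L / 2 ↔ kb = 0) := by
  intro x₀
  set g := fun c ↦ artanh ((Real.cosh (ψ * L) - 1) / (Real.sinh (ψ * L) + c))
  have hg := strictAntiOn_artanh_cosh_sub_one_div_sinh_add (mul_pos hψ hL)
  have hc : kb / (E * ψ) ∈ Ici 0 := by simp only [mem_Ici]; positivity
  have hmid : (1 / ψ) * g 0 = L / 2 := by
    simp only [g, add_zero, ← Real.tanh_half_eq, artanh_tanh]
    field_simp
  have hx₀ : x₀ = (1 / ψ) * g (kb / (E * ψ)) := rfl
  rw [hx₀, ← hmid, mul_right_inj' (by positivity), hg.injOn.eq_iff hc self_mem_Ici,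
    div_eq_zero_iff, or_iff_left (mul_pos hE hψ).ne']
  exact ⟨mul_le_mul_of_nonneg_left (hg.antitoneOn self_mem_Ici hc hc) (by positivity), Iff.rfl⟩
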